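/- arXiv:1612.06408 — 3 statements merged into one kernel-verified Lean document; each statement's English description precedes it below -/
import Mathlib

section
/- Let λ > 0, 0 < p < 1 and let n ≥ 1 be an integer. Then ∫₀^∞ e^{-t} · ( ∑_{j=n}^∞ e^{-λt}(1-e^{-λt})^{j-1} · C(j,n) p^n (1-p)^{j-n} ) dt = (p^n/λ) · (Γ(n)Γ(1+1/λ)/Γ(n+1+1/λ)) · ∑_{k=0}^∞ ((n+1)_k (n)_k / (n+1+1/λ)_k) · (1-p)^k / k!, where C(j,n) is the binomial coefficient, Γ is the Gamma function, and (a)_k = a(a+1)⋯(a+k-1) is the Pochhammer symbol. (The right-hand side equals (p^n/λ) B(n, 1+1/λ) ₂F₁(n+1, n; n+1+1/λ; 1-p); this is the probability that exactly n individuals survive the collapse in the Yule growth with binomial catastrophe scheme.) -/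
/-!
Write the integrand as `∑ₖ Cₖ gₖ(t)` with `Cₖ = C(k+n, n) pⁿ (1-p)ᵏ` and
`gₖ(t) = e^{-(1+λ)t} (1 - e^{-λt})^{k+n-1}`. Since `0 ≤ gₖ(t) ≤ e^{-(1+λ)t}` and `∑ Cₖ` is a negative
binomial series in `1 - p`, the sum and the integral commute. Each `∫ gₖ` is the Beta integral
`B(1 + 1/λ, k + n)/λ = (k+n-1)! / (λ (1+1/λ)_{k+n})`, and `Γ(x + k) = Γ(x) (x)ₖ` turns
`Cₖ ∫ gₖ` into the `k`-th term of the Pochhammer series.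
-/

open MeasureTheory Real Set Polynomial Nat

section BetaIntegral

variable {c l : ℝ}

lemma one_sub_exp_neg_mem_Icc {x : ℝ} (hx : 0 ≤ x) : 1 - exp (-x) ∈ Icc 0 1 :=
  ⟨sub_nonneg.2 (exp_le_one_iff.2 (neg_nonpos.2 hx)), sub_le_self _ (exp_pos _).le⟩

lemma norm_exp_mul_one_sub_exp_pow_le {t : ℝ} (hl : 0 ≤ l) (ht : 0 ≤ t) (m : ℕ) :
    ‖exp (-(c * t)) * (1 - exp (-(l * t))) ^ m‖ ≤ exp (-(c * t)) := by
  obtain ⟨h0, h1⟩ := one_sub_exp_neg_mem_Icc (mul_nonneg hl ht)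
  rw [norm_mul, norm_of_nonneg (exp_pos _).le, norm_of_nonneg (pow_nonneg h0 m)]
  exact mul_le_of_le_one_right (exp_pos _).le (pow_le_one₀ h0 h1)

lemma integrableOn_exp_neg_mul_Ioi (hc : 0 < c) :
    IntegrableOn (fun t => exp (-(c * t))) (Ioi 0) := by
  simpa [neg_mul] using exp_neg_integrableOn_Ioi 0 hc

lemma integrableOn_exp_mul_one_sub_exp_pow (hc : 0 < c) (hl : 0 ≤ l) (m : ℕ) :
    IntegrableOn (fun t => exp (-(c * t)) * (1 - exp (-(l * t))) ^ m) (Ioi 0) := by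
  refine (integrableOn_exp_neg_mul_Ioi hc).mono' (by fun_prop) ?_
  filter_upwards [ae_restrict_mem measurableSet_Ioi] with t ht
  exact norm_exp_mul_one_sub_exp_pow_le hl (le_of_lt ht) m

lemma ascPochhammer_succ_eval_left {S : Type*} [CommSemiring S] (m : ℕ) (x : S) :
    (ascPochhammer S (m + 1)).eval x = x * (ascPochhammer S m).eval (x + 1) := by
  simp only [ascPochhammer_succ_left, eval_mul, eval_X, eval_comp, eval_add, eval_one]

/-- This is `B (c / l, m + 1) / l` (substitute `u = exp (-(l t))`). The induction on `m` uses
`(1 - u) ^ (m + 1) = (1 - u) ^ m - u * (1 - u) ^ m`, which shifts `c` to `c + l`. -/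
lemma integral_exp_mul_one_sub_exp_pow (hl : 0 < l) (hc : 0 < c) (m : ℕ) :
    ∫ t in Ioi 0, exp (-(c * t)) * (1 - exp (-(l * t))) ^ m
      = m ! / (l * (ascPochhammer ℝ (m + 1)).eval (c / l)) := by
  induction m generalizing c hc with
  | zero =>
    simp only [pow_zero, mul_one, ← neg_mul, integral_exp_mul_Ioi (neg_lt_zero.2 hc), mul_zero,
      exp_zero, factorial_zero, cast_one, zero_add, ascPochhammer_one, eval_X]
    field_simp
  | succ m ih =>
    have hcl : 0 < c + l := by linarith
    have hsplit : ∀ t, exp (-(c * t)) * (1 - exp (-(l * t))) ^ (m + 1)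
        = exp (-(c * t)) * (1 - exp (-(l * t))) ^ m
          - exp (-((c + l) * t)) * (1 - exp (-(l * t))) ^ m := fun t => by
      rw [add_mul, neg_add, exp_add, pow_succ]; ring
    simp_rw [hsplit]
    rw [integral_sub (integrableOn_exp_mul_one_sub_exp_pow hc hl.le m)
      (integrableOn_exp_mul_one_sub_exp_pow hcl hl.le m), ih hc, ih hcl,
      add_div, div_self hl.ne']
    have hx : 0 < c / l := div_pos hc hl
    generalize c / l = x at hx ⊢
    have hA := ascPochhammer_pos (m + 1) x hx
    have hB := ascPochhammer_pos (m + 1) (x + 1) (by linarith)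
    have hshift := ascPochhammer_succ_eval_left (m + 1) x
    rw [ascPochhammer_succ_eval (m + 1) x] at hshift ⊢
    rw [factorial_succ]
    field_simp
    push_cast at hshift ⊢
    linear_combination -(m ! : ℝ) * hshift

end BetaIntegral

lemma Real.Gamma_add_nat_eq_mul_ascPochhammer {x : ℝ} (hx : 0 < x) (k : ℕ) :
    Gamma (x + k) = Gamma x * (ascPochhammer ℝ k).eval x := by
  induction k with
  | zero => simp
  | succ k ih =>
    rw [cast_succ, ← add_assoc, Gamma_add_one (by positivity), ih, ascPochhammer_succ_eval]
    ring

lemma choose_mul_factorial_div_ascPochhammer {n : ℕ} (hn : 1 ≤ n) (k : ℕ) {x : ℝ} (hx : 0 < x) :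
    ((k + n).choose n : ℝ) * (k + n - 1)! / (ascPochhammer ℝ (k + n)).eval x
      = Gamma n * Gamma x / Gamma (n + x) *
        ((ascPochhammer ℝ k).eval ((n : ℝ) + 1) * (ascPochhammer ℝ k).eval (n : ℝ)
          / (ascPochhammer ℝ k).eval ((n : ℝ) + x)) / k ! := by
  have hGamma_n : Gamma n * (ascPochhammer ℝ k).eval (n : ℝ) = (k + n - 1)! := by
    obtain ⟨m, rfl⟩ : ∃ m, n = m + 1 := ⟨n - 1, by omega⟩
    rw [cast_succ, Gamma_nat_eq_factorial, ← cast_succ, ascPochhammer_nat_eq_natCast_ascFactorial,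
      ← cast_mul, factorial_mul_ascFactorial, show k + (m + 1) - 1 = m + k by omega]
  have hchoose : (ascPochhammer ℝ k).eval ((n : ℝ) + 1) = k ! * ((k + n).choose n : ℝ) := by
    rw [← cast_succ, ascPochhammer_nat_eq_natCast_ascFactorial,
      ascFactorial_eq_factorial_mul_choose, add_comm n k, choose_symm_add]
    push_cast; rfl
  have hGamma_shift : Gamma x * (ascPochhammer ℝ (k + n)).eval x
      = Gamma (n + x) * (ascPochhammer ℝ k).eval ((n : ℝ) + x) := by
    rw [← Gamma_add_nat_eq_mul_ascPochhammer hx,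
      ← Gamma_add_nat_eq_mul_ascPochhammer (by positivity)]
    congr 1; push_cast; ring
  have hP := ascPochhammer_pos (k + n) x hx
  have hP' := ascPochhammer_pos k ((n : ℝ) + x) (by positivity)
  have hΓ := Gamma_pos_of_pos hx
  have hΓ' := Gamma_pos_of_pos (by positivity : 0 < (n : ℝ) + x)
  rw [hchoose, ← hGamma_n]
  field_simp
  rw [mul_assoc _ (Gamma _), ← hGamma_shift]
  ring

lemma integral_tsum_mul_of_integral_norm_le {α ι : Type*} [MeasurableSpace α] [Countable ι]
    {μ : Measure α} {C : ι → ℝ} {g : ι → α → ℝ} {B : ℝ} (hC : Summable fun i => ‖C i‖)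
    (hg : ∀ i, Integrable (g i) μ) (hB : ∀ i, ∫ a, ‖g i a‖ ∂μ ≤ B) :
    ∫ a, ∑' i, C i * g i a ∂μ = ∑' i, C i * ∫ a, g i a ∂μ := by
  have hnorm (i : ι) : ∫ a, ‖C i * g i a‖ ∂μ = ‖C i‖ * ∫ a, ‖g i a‖ ∂μ := by
    simp only [norm_mul, integral_const_mul]
  rw [← integral_tsum_of_summable_integral_norm (fun i => (hg i).const_mul (C i))]
  · simp only [integral_const_mul]
  · refine (hC.mul_right B).of_nonneg_of_le (fun i => integral_nonneg fun _ => norm_nonneg _)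
      fun i => ?_
    rw [hnorm]
    exact mul_le_mul_of_nonneg_left (hB i) (norm_nonneg _)

/-- Probability that exactly `n ≥ 1` individuals survive the collapse in the Yule
growth (rate `l`) with binomial catastrophe (parameter `p`) scheme:
`(pⁿ/λ)·B(n,1+1/λ)·₂F₁(n+1,n;n+1+1/λ;1-p)`, with the Beta function written as a
quotient of Gamma functions and the hypergeometric function as a Pochhammer series.
The sum over `j ≥ n` is written by reindexing `j = k + n`. -/
theorem yule_binomial_n_survivors (l p : ℝ) (hl : 0 < l) (hp0 : 0 < p) (hp1 : p < 1)
    (n : ℕ) (hn : 1 ≤ n) :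
    ∫ t in Set.Ioi (0:ℝ), Real.exp (-t) *
      ∑' k : ℕ, Real.exp (-(l * t)) * (1 - Real.exp (-(l * t))) ^ (k + n - 1) *
        ((k + n).choose n : ℝ) * p ^ n * (1 - p) ^ k
      = (p ^ n / l) *
        (Real.Gamma n * Real.Gamma (1 + 1 / l) / Real.Gamma (n + 1 + 1 / l)) *
        ∑' k : ℕ, ((ascPochhammer ℝ k).eval ((n : ℝ) + 1) *
            (ascPochhammer ℝ k).eval (n : ℝ) /
            (ascPochhammer ℝ k).eval ((n : ℝ) + 1 + 1 / l)) *
          (1 - p) ^ k / (Nat.factorial k) := by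
  set C : ℕ → ℝ := fun k => (k + n).choose n * p ^ n * (1 - p) ^ k
  set g : ℕ → ℝ → ℝ := fun k t => exp (-((1 + l) * t)) * (1 - exp (-(l * t))) ^ (k + n - 1)
  have hC : Summable fun k => ‖C k‖ := by
    have hq : ‖1 - p‖ < 1 := by rw [norm_of_nonneg (by linarith)]; linarith
    refine ((summable_choose_mul_geometric_of_norm_lt_one n hq).mul_right (p ^ n)).congr
      fun k => ?_
    rw [norm_of_nonneg (by simp only [C]; have := sub_pos.2 hp1; positivity)]
    ring
  have hc : 0 < 1 + l := by linarith
  have hg (k : ℕ) : Integrable (g k) (volume.restrict (Ioi 0)) :=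
    integrableOn_exp_mul_one_sub_exp_pow hc hl.le _
  have hB (k : ℕ) : ∫ t in Ioi 0, ‖g k t‖ ≤ ∫ t in Ioi 0, exp (-((1 + l) * t)) :=
    setIntegral_mono_on (hg k).norm (integrableOn_exp_neg_mul_Ioi hc) measurableSet_Ioi
      fun t ht => norm_exp_mul_one_sub_exp_pow_le hl.le (le_of_lt ht) _
  have hx : (1 + l) / l = 1 + 1 / l := by field_simp; ring
  calc _ = ∫ t in Ioi 0, ∑' k, C k * g k t := by
        congr 1; ext t
        rw [← tsum_mul_left]
        congr 1; ext k
        simp only [C, g, add_mul, neg_add, exp_add, one_mul]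
        ring
    _ = ∑' k, C k * ∫ t in Ioi 0, g k t := integral_tsum_mul_of_integral_norm_le hC hg hB
    _ = _ := by
      rw [← tsum_mul_left]
      congr 1; ext k
      simp only [C, g]
      rw [integral_exp_mul_one_sub_exp_pow hl hc, show k + n - 1 + 1 = k + n by omega, hx,
        add_assoc (n : ℝ)]
      linear_combination (p ^ n * (1 - p) ^ k / l) *
        choose_mul_factorial_div_ascPochhammer hn k (x := 1 + 1 / l) (by positivity)
end

section
/- Let λ > 0, 0 < p ≤ 1 and let d ≥ 1 be an integer. Let E = ∑_{n=0}^∞ (d/(d+1))^n ∫₀^∞ e^{-t} ( ∑_{k=max(n,1)}^∞ e^{-λt}(1-e^{-λt})^{k-1} C(k,n) p^n (1-p)^{k-n} ) dt, i.e. E = E[(d/(d+1))^N] for the Yule growth with binomial catastrophe survivor distribution. Then E ≥ d/(d+1) if and only if ∑_{k=0}^∞ k! ((d+1-p)/(d+1))^k / ((2+1/λ)_k) ≥ d(λ+1)/(d+1-p). -/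
/-!
Write `x = 1 - p + p s`. Summing first over the number `n` of survivors, the binomial theorem
gives `∑ₙ sⁿ P(N = n | X_T = k) = xᵏ`, so (all terms being nonnegative, sums and integral
commute) `E[s^N] = ∑ₖ xᵏ P(X_T = k)`. Integrating `e^{-t} (1 - e^{-λt})^{j+1}` by parts gives
`P(X_T > j + 1) = (j + 1) λ P(X_T = j + 1)`; together with
`P(X_T > j) = P(X_T = j + 1) + P(X_T > j + 1)` and `P(X_T > 0) = 1` this determines
`P(X_T = j + 1) = j! / ((λ + 1) (2 + 1/λ)_j)`. Hence
`E[s^N] = x/(λ + 1) · ∑ⱼ j! xʲ / (2 + 1/λ)_j`, and at `s = d/(d + 1)` the extinction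
condition rearranges to the stated one.
-/

open MeasureTheory Real Set
open scoped Nat

theorem tsum_integral_tsum_mul_of_nonneg {α : Type*} [MeasurableSpace α] {μ : Measure α}
    {c : ℕ → ℕ → ℝ} {g : ℕ → α → ℝ} (hc : ∀ n k, 0 ≤ c n k)
    (hg : ∀ k, 0 ≤ᵐ[μ] g k) (hgi : ∀ k, Integrable (g k) μ)
    (hrow : ∀ k, Summable fun n => c n k)
    (hsum : Summable fun k => (∑' n, c n k) * ∫ x, g k x ∂μ) :
    ∑' n, ∫ x, ∑' k, c n k * g k x ∂μ = ∑' k, (∑' n, c n k) * ∫ x, g k x ∂μ := by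
  have hprod : Summable fun q : ℕ × ℕ => c q.2 q.1 * ∫ x, g q.1 x ∂μ := by
    have hnn : 0 ≤ fun q : ℕ × ℕ => c q.2 q.1 * ∫ x, g q.1 x ∂μ :=
      fun q => mul_nonneg (hc _ _) (integral_nonneg_of_ae (hg q.1))
    exact (summable_prod_of_nonneg hnn).2
      ⟨fun k => (hrow k).mul_right (∫ x, g k x ∂μ),
        hsum.congr fun k => tsum_mul_right.symm⟩
  have hcol (n : ℕ) :
      ∫ x, ∑' k, c n k * g k x ∂μ = ∑' k, c n k * ∫ x, g k x ∂μ := by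
    have hnorm (k : ℕ) : ∫ x, ‖c n k * g k x‖ ∂μ = c n k * ∫ x, g k x ∂μ := by
      rw [← integral_const_mul]
      refine integral_congr_ae ((hg k).mono fun x hx => ?_)
      exact Real.norm_of_nonneg (mul_nonneg (hc n k) hx)
    rw [← integral_tsum_of_summable_integral_norm fun k => (hgi k).const_mul (c n k)]
    · simp_rw [integral_const_mul]
    · simp_rw [hnorm]
      exact hprod.prod_symm.prod_factor n
  simp_rw [hcol, ← tsum_mul_right]
  exact hprod.tsum_comm (f := fun k n => c n k * ∫ x, g k x ∂μ)

lemma integrableOn_exp_neg_mul_of_abs_le_one {g : ℝ → ℝ} (hg : Continuous g)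
    (hg_le : ∀ t ∈ Ioi (0 : ℝ), |g t| ≤ 1) :
    IntegrableOn (fun t => exp (-t) * g t) (Ioi 0) := by
  refine Integrable.mono' (integrableOn_exp_neg_Ioi 0)
    (by fun_prop : Continuous fun t => exp (-t) * g t).aestronglyMeasurable ?_
  filter_upwards [ae_restrict_mem measurableSet_Ioi] with t ht
  rw [norm_mul, Real.norm_of_nonneg (exp_pos _).le]
  exact mul_le_of_le_one_right (exp_pos _).le (hg_le t ht)

lemma one_sub_exp_neg_mul_mem_Icc {l t : ℝ} (hl : 0 ≤ l) (ht : 0 ≤ t) :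
    1 - exp (-(l * t)) ∈ Icc 0 1 :=
  ⟨sub_nonneg.2 (exp_le_one_iff.2 (neg_nonpos.2 (mul_nonneg hl ht))),
    sub_le_self _ (exp_pos _).le⟩

lemma exp_neg_mul_mul_one_sub_pow_mem_Icc {l t : ℝ} (hl : 0 ≤ l) (ht : 0 ≤ t) (j : ℕ) :
    exp (-(l * t)) * (1 - exp (-(l * t))) ^ j ∈ Icc 0 1 := by
  obtain ⟨h0, h1⟩ := one_sub_exp_neg_mul_mem_Icc hl ht
  exact ⟨by positivity, mul_le_one₀ (by linarith) (by positivity) (pow_le_one₀ h0 h1)⟩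

lemma hasSum_pow_mul_binomial (p s : ℝ) (k : ℕ) :
    HasSum (fun n : ℕ => s ^ n *
        if max n 1 ≤ k then (k.choose n : ℝ) * p ^ n * (1 - p) ^ (k - n) else 0)
      (if k = 0 then 0 else (1 - p + p * s) ^ k) := by
  have hsupp : ∀ n ∉ Finset.range (k + 1), (s ^ n *
      if max n 1 ≤ k then (k.choose n : ℝ) * p ^ n * (1 - p) ^ (k - n) else 0) = 0 := by
    intro n hn
    rw [if_neg (by simp at hn; omega), mul_zero]
  convert (hasSum_sum_of_ne_finset_zero hsupp : HasSum _ _) using 1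
  rcases Nat.eq_zero_or_pos k with rfl | hk
  · simp
  · rw [if_neg hk.ne', show 1 - p + p * s = p * s + (1 - p) by ring, add_pow]
    refine Finset.sum_congr rfl fun n hn => ?_
    rw [if_pos (by simp at hn; omega)]
    ring

section Yule

variable {l : ℝ}

/-- `P(X_T = j + 1)` for the Yule process `X` of rate `l` started from one individual and an
independent `T ~ Exp(1)`. -/
noncomputable def yuleMass (l : ℝ) (j : ℕ) : ℝ :=
  ∫ t in Ioi 0, exp (-t) * (exp (-(l * t)) * (1 - exp (-(l * t))) ^ j)

/-- `P(X_T > j)`. -/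
noncomputable def yuleTail (l : ℝ) (j : ℕ) : ℝ :=
  ∫ t in Ioi 0, exp (-t) * (1 - exp (-(l * t))) ^ j

lemma integrableOn_yuleMass (hl : 0 ≤ l) (j : ℕ) :
    IntegrableOn (fun t => exp (-t) * (exp (-(l * t)) * (1 - exp (-(l * t))) ^ j)) (Ioi 0) :=
  integrableOn_exp_neg_mul_of_abs_le_one (by fun_prop) fun t ht =>
    have h := exp_neg_mul_mul_one_sub_pow_mem_Icc hl ht.out.le j
    (abs_of_nonneg h.1).trans_le h.2

lemma integrableOn_yuleTail (hl : 0 ≤ l) (j : ℕ) :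
    IntegrableOn (fun t => exp (-t) * (1 - exp (-(l * t))) ^ j) (Ioi 0) :=
  integrableOn_exp_neg_mul_of_abs_le_one (by fun_prop) fun t ht =>
    have ⟨h0, h1⟩ := one_sub_exp_neg_mul_mem_Icc hl ht.out.le
    (abs_of_nonneg (pow_nonneg h0 j)).trans_le (pow_le_one₀ h0 h1)

lemma yuleMass_nonneg (hl : 0 ≤ l) (j : ℕ) : 0 ≤ yuleMass l j :=
  setIntegral_nonneg measurableSet_Ioi fun _ ht =>
    mul_nonneg (exp_pos _).le (exp_neg_mul_mul_one_sub_pow_mem_Icc hl ht.out.le j).1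

lemma yuleMass_le_one (hl : 0 ≤ l) (j : ℕ) : yuleMass l j ≤ 1 :=
  (setIntegral_mono_on (integrableOn_yuleMass hl j) (integrableOn_exp_neg_Ioi 0) measurableSet_Ioi
    fun _ ht => mul_le_of_le_one_right (exp_pos _).le
      (exp_neg_mul_mul_one_sub_pow_mem_Icc hl ht.out.le j).2).trans_eq integral_exp_neg_Ioi_zero

lemma yuleTail_zero : yuleTail l 0 = 1 := by
  simpa only [yuleTail, pow_zero, mul_one] using integral_exp_neg_Ioi_zero

lemma yuleTail_eq_yuleMass_add_yuleTail (hl : 0 ≤ l) (j : ℕ) :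
    yuleTail l j = yuleMass l j + yuleTail l (j + 1) := by
  rw [yuleMass, yuleTail, yuleTail, ← integral_add (integrableOn_yuleMass hl j)
    (integrableOn_yuleTail hl (j + 1))]
  exact setIntegral_congr_fun measurableSet_Ioi fun t _ => by ring

lemma yuleTail_succ (hl : 0 < l) (j : ℕ) : yuleTail l (j + 1) = (j + 1) * l * yuleMass l j := by
  set f : ℝ → ℝ := fun t => exp (-t) * (1 - exp (-(l * t))) ^ (j + 1)
  have hf' (t : ℝ) : HasDerivAt f (-(exp (-t) * (1 - exp (-(l * t))) ^ (j + 1)) +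
      (j + 1) * l * (exp (-t) * (exp (-(l * t)) * (1 - exp (-(l * t))) ^ j))) t := by
    have hexp : HasDerivAt (fun t => exp (-t)) (-exp (-t)) t := by
      simpa using (hasDerivAt_neg t).exp
    have hgrowth : HasDerivAt (fun t => 1 - exp (-(l * t))) (-(exp (-(l * t)) * -(l * 1))) t :=
      (((hasDerivAt_id' t).const_mul l).fun_neg.exp).const_sub 1
    refine (hexp.mul (hgrowth.pow (j + 1))).congr_deriv ?_
    simp only [Pi.pow_apply, Nat.add_sub_cancel]
    push_cast
    ring
  have hlim : Filter.Tendsto f Filter.atTop (nhds 0) := by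
    have hgrowth : Filter.Tendsto (fun t => 1 - exp (-(l * t))) Filter.atTop (nhds 1) := by
      simpa using tendsto_const_nhds.sub
        (tendsto_exp_neg_atTop_nhds_zero.comp (Filter.tendsto_id.const_mul_atTop hl))
    simpa using tendsto_exp_neg_atTop_nhds_zero.mul (hgrowth.pow (j + 1))
  have hint₁ : IntegrableOn (fun t => -(exp (-t) * (1 - exp (-(l * t))) ^ (j + 1))) (Ioi 0) :=
    (integrableOn_yuleTail hl.le (j + 1)).neg
  have hint₂ : IntegrableOn
      (fun t => (j + 1) * l * (exp (-t) * (exp (-(l * t)) * (1 - exp (-(l * t))) ^ j))) (Ioi 0) :=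
    (integrableOn_yuleMass hl.le j).const_mul _
  have hibp := integral_Ioi_of_hasDerivAt_of_tendsto' (fun t _ => hf' t) (hint₁.add hint₂) hlim
  rw [integral_add hint₁ hint₂, integral_neg, integral_const_mul] at hibp
  simp only [f, neg_zero, mul_zero, exp_zero, sub_self, zero_pow (Nat.succ_ne_zero j)] at hibp
  rw [yuleTail, yuleMass]
  linarith

lemma yuleMass_eq (hl : 0 < l) (j : ℕ) :
    yuleMass l j = j ! / ((l + 1) * (ascPochhammer ℝ j).eval (2 + 1 / l)) := by
  have htail (j : ℕ) : yuleTail l j = (1 + (j + 1) * l) * yuleMass l j := by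
    rw [yuleTail_eq_yuleMass_add_yuleTail hl.le, yuleTail_succ hl]
    ring
  induction j with
  | zero =>
    have h := htail 0
    rw [yuleTail_zero] at h
    simp only [Nat.factorial_zero, Nat.cast_one, ascPochhammer_zero, Polynomial.eval_one, mul_one]
    rw [eq_div_iff (by positivity)]
    push_cast at h
    linarith
  | succ j ih =>
    have hrec := (htail (j + 1)).symm.trans (yuleTail_succ hl j)
    rw [ascPochhammer_succ_eval, Nat.factorial_succ]
    set P := (ascPochhammer ℝ j).eval (2 + 1 / l)
    have hP : 0 < P := ascPochhammer_pos j _ (by positivity)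
    rw [ih] at hrec
    push_cast at hrec ⊢
    rw [eq_div_iff (by positivity)]
    field_simp at hrec ⊢
    linear_combination hrec

end Yule

theorem yule_binomial_generating_function {l p s : ℝ} (hl : 0 < l) (hp0 : 0 < p) (hp1 : p ≤ 1)
    (hs0 : 0 ≤ s) (hs1 : s < 1) :
    ∑' n : ℕ, s ^ n * ∫ t in Ioi (0 : ℝ), exp (-t) *
        ∑' k : ℕ, (if max n 1 ≤ k then
          exp (-(l * t)) * (1 - exp (-(l * t))) ^ (k - 1) *
            (k.choose n : ℝ) * p ^ n * (1 - p) ^ (k - n)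
          else 0)
      = (1 - p + p * s) / (l + 1) * ∑' j : ℕ, (j ! : ℝ) * (1 - p + p * s) ^ j /
          (ascPochhammer ℝ j).eval (2 + 1 / l) := by
  set x := 1 - p + p * s
  have hx0 : 0 ≤ x := by nlinarith
  have hx1 : x < 1 := by nlinarith
  set c : ℕ → ℕ → ℝ := fun n k => s ^ n *
    if max n 1 ≤ k then (k.choose n : ℝ) * p ^ n * (1 - p) ^ (k - n) else 0
  set g : ℕ → ℝ → ℝ := fun k t =>
    exp (-t) * (exp (-(l * t)) * (1 - exp (-(l * t))) ^ (k - 1))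
  have hc (n k : ℕ) : 0 ≤ c n k := by
    have := sub_nonneg.2 hp1
    simp only [c]
    split_ifs <;> positivity
  have hrow (k : ℕ) : ∑' n, c n k = if k = 0 then 0 else x ^ k :=
    (hasSum_pow_mul_binomial p s k).tsum_eq
  have hshift : Summable fun j : ℕ => x ^ (j + 1) * yuleMass l j :=
    (summable_geometric_of_lt_one hx0 hx1).mul_left x |>.of_nonneg_of_le
      (fun j => mul_nonneg (pow_nonneg hx0 _) (yuleMass_nonneg hl.le j))
      fun j => by
        rw [pow_succ']
        exact mul_le_of_le_one_right (by positivity) (yuleMass_le_one hl.le j)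
  calc _ = ∑' n, ∫ t in Ioi (0 : ℝ), ∑' k, c n k * g k t := by
        refine tsum_congr fun n => ?_
        rw [← integral_const_mul]
        refine integral_congr_ae (ae_of_all _ fun t => ?_)
        simp only [c, g, ← tsum_mul_left]
        refine tsum_congr fun k => ?_
        split_ifs <;> ring
    _ = ∑' k, (∑' n, c n k) * yuleMass l (k - 1) := by
        refine tsum_integral_tsum_mul_of_nonneg hc (fun k => ?_)
          (fun k => integrableOn_yuleMass hl.le _)
          (fun k => (hasSum_pow_mul_binomial p s k).summable) ?_
        · filter_upwards [ae_restrict_mem measurableSet_Ioi] with t ht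
          exact mul_nonneg (exp_pos _).le (exp_neg_mul_mul_one_sub_pow_mem_Icc hl.le ht.out.le _).1
        · refine (summable_nat_add_iff 1).1 (hshift.congr fun j => ?_)
          simp [hrow, g, yuleMass]
    _ = ∑' j, x ^ (j + 1) * yuleMass l j := by
        rw [tsum_eq_zero_add' (by simpa [hrow] using hshift)]
        simp [hrow]
    _ = _ := by
        rw [← tsum_mul_left]
        refine tsum_congr fun j => ?_
        rw [yuleMass_eq hl]
        have := ascPochhammer_pos j (2 + 1 / l) (by positivity)
        field_simp
        ring

/-- Corollary 3.3 (i): for the Yule growth (rate `l`) with binomial catastrophe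
(parameter `p`) survivor distribution, `E[(d/(d+1))^N] ≥ d/(d+1)` (the extinction
condition on the tree `T^d`) if and only if
`₂F₁(1,1;2+1/λ;(d(1-p)+1)/(d+1)) ≥ d(λ+1)/(d+1-p)`, with the hypergeometric
function written as the Pochhammer series at `x = (d+1-p)/(d+1)`. -/
theorem yule_binomial_extinction_condition (l p : ℝ) (hl : 0 < l)
    (hp0 : 0 < p) (hp1 : p ≤ 1) (d : ℕ) (hd : 1 ≤ d) :
    (∑' n : ℕ, ((d : ℝ) / (d + 1)) ^ n *
        ∫ t in Set.Ioi (0:ℝ), Real.exp (-t) *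
          ∑' k : ℕ, (if max n 1 ≤ k then
            Real.exp (-(l * t)) * (1 - Real.exp (-(l * t))) ^ (k - 1) *
              (k.choose n : ℝ) * p ^ n * (1 - p) ^ (k - n)
            else 0)
        ≥ (d : ℝ) / (d + 1))
      ↔ ∑' k : ℕ, (Nat.factorial k : ℝ) * (((d : ℝ) + 1 - p) / (d + 1)) ^ k /
          (ascPochhammer ℝ k).eval (2 + 1 / l)
        ≥ (d : ℝ) * (l + 1) / ((d : ℝ) + 1 - p) := by
  have hd1 : (1 : ℝ) ≤ d := by exact_mod_cast hd
  have hs1 : (d : ℝ) / (d + 1) < 1 := (div_lt_one (by positivity)).2 (lt_add_one _)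
  have hx : 1 - p + p * (d / (d + 1)) = (d + 1 - p) / (d + 1) := by
    field_simp
    ring
  have hc : 0 < ((d : ℝ) + 1 - p) / (d + 1) / (l + 1) := by
    have : 0 < (d : ℝ) + 1 - p := by linarith
    positivity
  rw [yule_binomial_generating_function hl hp0 hp1 (by positivity) hs1, hx, ge_iff_le, ge_iff_le,
    ← div_le_iff₀' hc]
  field_simp
end

section
/- Let λ > 0, 0 < p ≤ 1 and let d ≥ 2 be an integer. Let E = ∑_{n=0}^∞ (d/(d+1))^n ∫₀^∞ e^{-t} ( ∑_{k=max(n,1)}^∞ e^{-λt}(1-e^{-λt})^{k-1} C(k,n) p^n (1-p)^{k-n} ) dt, i.e. E = E[(d/(d+1))^N] for the Yule growth with binomial catastrophe survivor distribution. Then E < (d-1)/d if and only if ∑_{k=0}^∞ k! ((d+1-p)/(d+1))^k / ((2+1/λ)_k) < (d²-1)(λ+1)/(d(d+1-p)). -/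
/-!
Given the colony size `K = X_T` at collapse, `N` is `Binomial(K, p)`, so
`E[s^N] = E[r^K]` with `r = p s + 1 - p = (d + 1 - p)/(d + 1)` for `s = d/(d + 1)`.
Integrating by parts, the tails `P(X_T > k) = ∫ e^{-t} (1 - e^{-lt})^k dt` give
`(1 + (k + 1) l) P(X_T = k + 1) = k l P(X_T = k)`, hence
`P(X_T = k + 1) = k! / ((l + 1) (2 + 1/l)_k)` and `E[r^K] = r ₂F₁(1, 1; 2 + 1/l; r) / (l + 1)`.
The survival condition is then a rearrangement.
-/

open MeasureTheory Real Set Filter Topology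

theorem integral_tsum_of_nonneg {α ι : Type*} [MeasurableSpace α] [Countable ι]
    {μ : Measure α} {f : ι → α → ℝ} (hf : ∀ i, Integrable (f i) μ)
    (hf0 : ∀ i, 0 ≤ᵐ[μ] f i) (hs : Summable fun i => ∫ x, f i x ∂μ) :
    ∫ x, ∑' i, f i x ∂μ = ∑' i, ∫ x, f i x ∂μ := by
  refine (integral_tsum_of_summable_integral_norm hf (hs.congr fun i => ?_)).symm
  exact integral_congr_ae <| (hf0 i).mono fun x hx => (norm_of_nonneg hx).symm

def binomialMass (p : ℝ) (k n : ℕ) : ℝ := k.choose n * p ^ n * (1 - p) ^ (k - n)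

section BinomialThinning

variable {p s : ℝ} {m : ℕ → ℝ}

lemma binomialMass_nonneg (hp0 : 0 ≤ p) (hp1 : p ≤ 1) (k n : ℕ) :
    0 ≤ binomialMass p k n := by
  have : 0 ≤ 1 - p := by linarith
  unfold binomialMass
  positivity

lemma binomialMass_of_lt {k n : ℕ} (h : k < n) : binomialMass p k n = 0 := by
  simp [binomialMass, Nat.choose_eq_zero_of_lt h]

lemma hasSum_pow_mul_binomialMass (s : ℝ) (k : ℕ) :
    HasSum (fun n => s ^ n * binomialMass p k n) ((p * s + (1 - p)) ^ k) := by
  have hfin : HasSum (fun n => s ^ n * binomialMass p k n)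
      (∑ n ∈ Finset.range (k + 1), s ^ n * binomialMass p k n) :=
    hasSum_sum_of_ne_finset_zero fun n hn => by
      rw [binomialMass_of_lt (by simpa using hn), mul_zero]
  convert hfin using 1
  rw [add_pow]
  refine Finset.sum_congr rfl fun n _ => ?_
  rw [binomialMass, mul_pow]
  ring

lemma summable_binomialThinning (hp0 : 0 ≤ p) (hp1 : p ≤ 1) (hs0 : 0 ≤ s) (hs1 : s ≤ 1)
    (hm0 : 0 ≤ m) (hm : Summable m) :
    Summable fun kn : ℕ × ℕ => s ^ kn.2 * binomialMass p kn.1 kn.2 * m kn.1 := by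
  have hslice k := (hasSum_pow_mul_binomialMass (p := p) s k).mul_right (m k)
  have hr0 : 0 ≤ p * s + (1 - p) := by nlinarith
  have hr1 : p * s + (1 - p) ≤ 1 := by nlinarith
  refine (summable_prod_of_nonneg fun kn => ?_).2 ⟨fun k => (hslice k).summable, ?_⟩
  · exact mul_nonneg (mul_nonneg (pow_nonneg hs0 _) (binomialMass_nonneg hp0 hp1 _ _)) (hm0 _)
  · refine hm.of_nonneg_of_le (fun k => ?_) (fun k => ?_) <;> rw [(hslice k).tsum_eq]
    · exact mul_nonneg (pow_nonneg hr0 k) (hm0 k)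
    · exact mul_le_of_le_one_left (hm0 k) (pow_le_one₀ hr0 hr1)

lemma summable_binomialMass_mul (hp0 : 0 ≤ p) (hp1 : p ≤ 1) (hm0 : 0 ≤ m) (hm : Summable m)
    (n : ℕ) : Summable fun k => binomialMass p k n * m k := by
  simpa using (summable_binomialThinning hp0 hp1 zero_le_one le_rfl hm0 hm).prod_symm.prod_factor n

-- If `K` has law `m` and `N` given `K = k` is `Binomial(k, p)`, then `E[s^N] = E[(p s + 1 - p)^K]`.
theorem tsum_pow_mul_tsum_binomialMass_mul (hp0 : 0 ≤ p) (hp1 : p ≤ 1) (hs0 : 0 ≤ s)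
    (hs1 : s ≤ 1) (hm0 : 0 ≤ m) (hm : Summable m) :
    ∑' n, s ^ n * ∑' k, binomialMass p k n * m k = ∑' k, (p * s + (1 - p)) ^ k * m k := by
  calc ∑' n, s ^ n * ∑' k, binomialMass p k n * m k
      = ∑' n, ∑' k, s ^ n * binomialMass p k n * m k := by
        simp_rw [← tsum_mul_left, mul_assoc]
    _ = ∑' k, ∑' n, s ^ n * binomialMass p k n * m k :=
        (summable_binomialThinning hp0 hp1 hs0 hs1 hm0 hm).tsum_comm
    _ = ∑' k, (p * s + (1 - p)) ^ k * m k :=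
        tsum_congr fun k => ((hasSum_pow_mul_binomialMass s k).mul_right (m k)).tsum_eq

end BinomialThinning

noncomputable def yuleProb (l t : ℝ) : ℕ → ℝ
  | 0 => 0
  | k + 1 => exp (-(l * t)) * (1 - exp (-(l * t))) ^ k

-- For `T ~ Exp(1)` independent of the Yule process `X`, these are `P(X_T = k)` and `P(X_T > k)`.
noncomputable def collapseSizeProb (l : ℝ) (k : ℕ) : ℝ :=
  ∫ t in Ioi 0, exp (-t) * yuleProb l t k

noncomputable def collapseSizeTail (l : ℝ) (k : ℕ) : ℝ :=
  ∫ t in Ioi 0, exp (-t) * (1 - exp (-(l * t))) ^ k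

section Yule

variable {l t : ℝ}

lemma exp_neg_mul_le_one (hl : 0 ≤ l) (ht : 0 ≤ t) : exp (-(l * t)) ≤ 1 :=
  exp_le_one_iff.2 (neg_nonpos.2 (mul_nonneg hl ht))

lemma one_sub_exp_neg_mul_nonneg (hl : 0 ≤ l) (ht : 0 ≤ t) : 0 ≤ 1 - exp (-(l * t)) :=
  sub_nonneg.2 (exp_neg_mul_le_one hl ht)

lemma one_sub_exp_neg_mul_le_one (l t : ℝ) : 1 - exp (-(l * t)) ≤ 1 :=
  sub_le_self 1 (exp_pos _).le

lemma yuleProb_nonneg (hl : 0 ≤ l) (ht : 0 ≤ t) : ∀ k, 0 ≤ yuleProb l t k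
  | 0 => le_rfl
  | k + 1 => mul_nonneg (exp_pos _).le (pow_nonneg (one_sub_exp_neg_mul_nonneg hl ht) k)

lemma yuleProb_le_one (hl : 0 ≤ l) (ht : 0 ≤ t) : ∀ k, yuleProb l t k ≤ 1
  | 0 => zero_le_one
  | k + 1 => mul_le_one₀ (exp_neg_mul_le_one hl ht)
      (pow_nonneg (one_sub_exp_neg_mul_nonneg hl ht) k)
      (pow_le_one₀ (one_sub_exp_neg_mul_nonneg hl ht) (one_sub_exp_neg_mul_le_one l t))

lemma continuous_yuleProb (l : ℝ) : ∀ k, Continuous fun t => yuleProb l t k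
  | 0 => continuous_const
  | k + 1 => by simp only [yuleProb]; fun_prop

lemma integrableOn_exp_neg_mul {g : ℝ → ℝ} (hg : Continuous g)
    (hb : ∀ t, 0 < t → |g t| ≤ 1) :
    IntegrableOn (fun t => exp (-t) * g t) (Ioi 0) :=
  (integrableOn_exp_neg_Ioi 0).mul_bdd hg.aestronglyMeasurable
    ((ae_restrict_mem measurableSet_Ioi).mono hb)

lemma integrableOn_exp_neg_mul_yuleProb (hl : 0 ≤ l) (k : ℕ) :
    IntegrableOn (fun t => exp (-t) * yuleProb l t k) (Ioi 0) :=
  integrableOn_exp_neg_mul (continuous_yuleProb l k) fun _ ht => by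
    rw [abs_of_nonneg (yuleProb_nonneg hl ht.le k)]
    exact yuleProb_le_one hl ht.le k

lemma integrableOn_exp_neg_mul_one_sub_pow (hl : 0 ≤ l) (k : ℕ) :
    IntegrableOn (fun t => exp (-t) * (1 - exp (-(l * t))) ^ k) (Ioi 0) :=
  integrableOn_exp_neg_mul (by fun_prop) fun _ ht => by
    rw [abs_of_nonneg (pow_nonneg (one_sub_exp_neg_mul_nonneg hl ht.le) k)]
    exact pow_le_one₀ (one_sub_exp_neg_mul_nonneg hl ht.le) (one_sub_exp_neg_mul_le_one l _)

lemma collapseSizeProb_zero : collapseSizeProb l 0 = 0 := by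
  simp [collapseSizeProb, yuleProb]

lemma collapseSizeProb_nonneg (hl : 0 ≤ l) (k : ℕ) : 0 ≤ collapseSizeProb l k :=
  setIntegral_nonneg measurableSet_Ioi fun _ ht =>
    mul_nonneg (exp_pos _).le (yuleProb_nonneg hl (le_of_lt ht) k)

lemma collapseSizeTail_zero : collapseSizeTail l 0 = 1 := by
  simpa [collapseSizeTail] using integral_exp_neg_Ioi_zero

lemma collapseSizeTail_nonneg (hl : 0 ≤ l) (k : ℕ) : 0 ≤ collapseSizeTail l k :=
  setIntegral_nonneg measurableSet_Ioi fun _ ht =>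
    mul_nonneg (exp_pos _).le (pow_nonneg (one_sub_exp_neg_mul_nonneg hl (le_of_lt ht)) k)

lemma collapseSizeProb_succ_eq_sub (hl : 0 ≤ l) (k : ℕ) :
    collapseSizeProb l (k + 1) = collapseSizeTail l k - collapseSizeTail l (k + 1) := by
  rw [collapseSizeTail, collapseSizeTail, ← integral_sub
    (integrableOn_exp_neg_mul_one_sub_pow hl k) (integrableOn_exp_neg_mul_one_sub_pow hl (k + 1))]
  refine integral_congr_ae (Eventually.of_forall fun t => ?_)
  simp only [yuleProb]
  ring

lemma summable_collapseSizeProb (hl : 0 ≤ l) : Summable (collapseSizeProb l) := by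
  refine summable_of_sum_range_le (c := 1) (collapseSizeProb_nonneg hl) fun n => ?_
  have htelescope :
      ∑ k ∈ Finset.range (n + 1), collapseSizeProb l k = 1 - collapseSizeTail l n := by
    rw [Finset.sum_range_succ', collapseSizeProb_zero, add_zero]
    simp_rw [collapseSizeProb_succ_eq_sub hl]
    rw [Finset.sum_range_sub', collapseSizeTail_zero]
  have htail := collapseSizeTail_nonneg hl n
  have hlast := collapseSizeProb_nonneg hl n
  rw [Finset.sum_range_succ] at htelescope
  linarith

-- Integration by parts against `d/dt [e^{-t} (1 - e^{-lt})^(k+1)]`; the boundary terms vanish.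
lemma collapseSizeTail_succ (hl : 0 < l) (k : ℕ) :
    collapseSizeTail l (k + 1) = (k + 1) * l * collapseSizeProb l (k + 1) := by
  have hderiv : ∀ t ∈ Ici (0 : ℝ),
      HasDerivAt (fun t => exp (-t) * (1 - exp (-(l * t))) ^ (k + 1))
      (-(exp (-t) * (1 - exp (-(l * t))) ^ (k + 1)) +
        (k + 1) * l * (exp (-t) * yuleProb l t (k + 1))) t := fun t _ => by
    have hq : HasDerivAt (fun t => 1 - exp (-(l * t))) (exp (-(l * t)) * l) t := by
      simpa using (((hasDerivAt_id t).const_mul l).neg.exp).const_sub 1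
    refine ((hasDerivAt_neg t).exp.fun_mul (hq.fun_pow (k + 1))).congr_deriv ?_
    rw [yuleProb, Nat.add_sub_cancel]
    push_cast
    ring
  have hlim : Tendsto (fun t => exp (-t) * (1 - exp (-(l * t))) ^ (k + 1)) atTop (𝓝 0) := by
    have hq : Tendsto (fun t => exp (-(l * t))) atTop (𝓝 0) :=
      tendsto_exp_atBot.comp (tendsto_neg_atTop_atBot.comp (tendsto_id.const_mul_atTop hl))
    simpa using (tendsto_exp_atBot.comp tendsto_neg_atTop_atBot).mul
      ((tendsto_const_nhds.sub hq).pow (k + 1))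
  have hibp := integral_Ioi_of_hasDerivAt_of_tendsto' hderiv
    ((integrableOn_exp_neg_mul_one_sub_pow hl.le (k + 1)).fun_neg.add
      ((integrableOn_exp_neg_mul_yuleProb hl.le (k + 1)).const_mul _)) hlim
  rw [integral_add (integrableOn_exp_neg_mul_one_sub_pow hl.le (k + 1)).fun_neg
    ((integrableOn_exp_neg_mul_yuleProb hl.le (k + 1)).const_mul _), integral_neg,
    integral_const_mul] at hibp
  have hboundary : exp (-0) * (1 - exp (-(l * 0))) ^ (k + 1) = 0 := by simp
  rw [hboundary] at hibp
  rw [collapseSizeTail, collapseSizeProb]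
  linarith

lemma one_add_mul_collapseSizeProb_succ (hl : 0 < l) (k : ℕ) :
    (1 + (k + 1) * l) * collapseSizeProb l (k + 1) = collapseSizeTail l k := by
  linear_combination collapseSizeProb_succ_eq_sub hl.le k - collapseSizeTail_succ hl k

theorem collapseSizeProb_succ (hl : 0 < l) (k : ℕ) :
    collapseSizeProb l (k + 1)
      = k.factorial / ((l + 1) * (ascPochhammer ℝ k).eval (2 + 1 / l)) := by
  induction k with
  | zero =>
    have h := one_add_mul_collapseSizeProb_succ hl 0
    rw [collapseSizeTail_zero] at h
    rw [ascPochhammer_zero, Polynomial.eval_one, Nat.factorial_zero, Nat.cast_one, mul_one,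
      eq_div_iff (by positivity)]
    linear_combination h
  | succ k ih =>
    have h := one_add_mul_collapseSizeProb_succ hl (k + 1)
    rw [collapseSizeTail_succ hl, ih] at h
    have hA := (ascPochhammer_pos k (2 + 1 / l) (by positivity)).ne'
    rw [ascPochhammer_succ_eval, Nat.factorial_succ]
    generalize (ascPochhammer ℝ k).eval (2 + 1 / l) = A at h hA ⊢
    have hq : 0 < 1 + ((k + 1 : ℕ) + 1) * l := by positivity
    rw [mul_comm, ← eq_div_iff hq.ne'] at h
    rw [h]
    field_simp
    push_cast
    ring

end Yule

lemma ite_max_le_eq_binomialMass_mul_yuleProb (l p t : ℝ) (n k : ℕ) :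
    (if max n 1 ≤ k then exp (-(l * t)) * (1 - exp (-(l * t))) ^ (k - 1) *
        (k.choose n : ℝ) * p ^ n * (1 - p) ^ (k - n) else 0)
      = binomialMass p k n * yuleProb l t k := by
  rcases k with _ | k
  · simp [yuleProb]
  by_cases hn : n ≤ k + 1
  · rw [if_pos (max_le hn (by omega)), yuleProb, binomialMass, Nat.add_sub_cancel]
    ring
  · rw [if_neg fun h => hn (le_of_max_le_left h), binomialMass_of_lt (by omega), zero_mul]

lemma integral_exp_neg_mul_tsum_binomialMass_mul_yuleProb {l p : ℝ} (hl : 0 ≤ l) (hp0 : 0 ≤ p)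
    (hp1 : p ≤ 1) (n : ℕ) :
    ∫ t in Ioi 0, exp (-t) * ∑' k, binomialMass p k n * yuleProb l t k
      = ∑' k, binomialMass p k n * collapseSizeProb l k := by
  simp_rw [← tsum_mul_left, mul_left_comm (exp _)]
  rw [integral_tsum_of_nonneg (fun k => (integrableOn_exp_neg_mul_yuleProb hl k).const_mul _)]
  · simp_rw [integral_const_mul, collapseSizeProb]
  · exact fun k => (ae_restrict_mem measurableSet_Ioi).mono fun t ht => mul_nonneg
      (binomialMass_nonneg hp0 hp1 k n)
      (mul_nonneg (exp_pos _).le (yuleProb_nonneg hl (le_of_lt ht) k))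
  · simp_rw [integral_const_mul]
    exact summable_binomialMass_mul hp0 hp1 (collapseSizeProb_nonneg hl)
      (summable_collapseSizeProb hl) n

-- The probability generating function of `X_T` is `r ₂F₁(1, 1; 2 + 1/l; r) / (l + 1)`.
theorem tsum_pow_mul_collapseSizeProb {l : ℝ} (hl : 0 < l) (r : ℝ) :
    ∑' k, r ^ k * collapseSizeProb l k
      = r / (l + 1) *
        ∑' k, (k.factorial : ℝ) * r ^ k / (ascPochhammer ℝ k).eval (2 + 1 / l) := by
  rw [← Nat.succ_injective.tsum_eq, ← tsum_mul_left]
  · refine tsum_congr fun k => ?_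
    have hA := (ascPochhammer_pos k (2 + 1 / l) (by positivity)).ne'
    rw [Nat.succ_eq_add_one, collapseSizeProb_succ hl]
    field_simp
    ring
  · rintro (_ | k) hk
    · simp [collapseSizeProb_zero] at hk
    · exact ⟨k, rfl⟩

/-- Corollary 3.3 (ii): for the Yule growth (rate `l`) with binomial catastrophe
(parameter `p`) survivor distribution, `E[(d/(d+1))^N] < (d-1)/d` (the survival
condition on the tree `T^d`) if and only if
`₂F₁(1,1;2+1/λ;(d(1-p)+1)/(d+1)) < (d²-1)(λ+1)/(d(d+1-p))`, with the hypergeometric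
function written as the Pochhammer series at `x = (d+1-p)/(d+1)`. -/
theorem yule_binomial_survival_condition (l p : ℝ) (hl : 0 < l)
    (hp0 : 0 < p) (hp1 : p ≤ 1) (d : ℕ) (hd : 2 ≤ d) :
    (∑' n : ℕ, ((d : ℝ) / (d + 1)) ^ n *
        ∫ t in Set.Ioi (0:ℝ), Real.exp (-t) *
          ∑' k : ℕ, (if max n 1 ≤ k then
            Real.exp (-(l * t)) * (1 - Real.exp (-(l * t))) ^ (k - 1) *
              (k.choose n : ℝ) * p ^ n * (1 - p) ^ (k - n)
            else 0)
        < ((d : ℝ) - 1) / d)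
      ↔ ∑' k : ℕ, (Nat.factorial k : ℝ) * (((d : ℝ) + 1 - p) / (d + 1)) ^ k /
          (ascPochhammer ℝ k).eval (2 + 1 / l)
        < ((d : ℝ) ^ 2 - 1) * (l + 1) / ((d : ℝ) * ((d : ℝ) + 1 - p)) := by
  have hd2 : (2 : ℝ) ≤ d := by exact_mod_cast hd
  set r : ℝ := ((d : ℝ) + 1 - p) / (d + 1) with hr_def
  have hr : p * (d / (d + 1)) + (1 - p) = r := by rw [hr_def]; field_simp; ring
  have hr0 : 0 < r := div_pos (by linarith) (by linarith)
  simp_rw [ite_max_le_eq_binomialMass_mul_yuleProb,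
    integral_exp_neg_mul_tsum_binomialMass_mul_yuleProb hl.le hp0.le hp1]
  rw [tsum_pow_mul_tsum_binomialMass_mul hp0.le hp1 (by positivity)
      (div_le_one_of_le₀ (by linarith) (by positivity)) (collapseSizeProb_nonneg hl.le)
      (summable_collapseSizeProb hl.le),
    hr, tsum_pow_mul_collapseSizeProb hl, mul_comm, ← lt_div_iff₀ (by positivity)]
  rw [show ((d : ℝ) - 1) / d / (r / (l + 1))
      = ((d : ℝ) ^ 2 - 1) * (l + 1) / (d * (d + 1 - p)) by
    rw [hr_def]
    field_simp
    ring]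
end
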